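/- arXiv:1301.0400 — 3 statements merged into one kernel-verified Lean document; each statement's English description precedes it below -/
import Mathlib

section
/- Let 0 < v < 1, 0 < r < 1, s > 0, a > 1 with a·r < 1, and suppose r·v + s > 1, s < r·v, and r > v. Let B = [−1,1] × [−v,v], S(x₁,x₂) = (r·x₂+s, r·x₁), and S∘T(x₁,x₂) = (−a·r·x₂ − s, −a·r·x₁). Then S(B) ∪ (S∘T)(B) ⊇ B. -/
/-!
Both maps have the form `x ↦ (c x₁ + t, c x₀)` with `c ≠ 0`, so they send the box `[-1,1] × [-v,v]`
onto the box `(t + [-|c| v, |c| v]) × [-|c|, |c|]`. Since `v < r ≤ a r`, both images are tall enough,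
and the horizontal ranges `[s - r v, s + r v]` and `[-s - a r v, -s + a r v]` cover `[-1, 1]` when
it is split at `s - r v`.
-/

def box (v : ℝ) : Set (EuclideanSpace ℝ (Fin 2)) :=
  {x | x 0 ∈ Set.Icc (-1 : ℝ) 1 ∧ x 1 ∈ Set.Icc (-v) v}

theorem mem_image_box_of_swap_affine {c t v : ℝ} (hc : c ≠ 0)
    {S : EuclideanSpace ℝ (Fin 2) → EuclideanSpace ℝ (Fin 2)}
    (hS : ∀ x, S x 0 = c * x 1 + t ∧ S x 1 = c * x 0) {y : EuclideanSpace ℝ (Fin 2)}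
    (hy0 : |y 0 - t| ≤ |c| * v) (hy1 : |y 1| ≤ |c|) : y ∈ S '' box v := by
  have habs : 0 < |c| := abs_pos.mpr hc
  refine ⟨!₂[y 1 / c, (y 0 - t) / c], ⟨?_, ?_⟩, ?_⟩
  · rw [Set.mem_Icc, ← abs_le]
    simpa [abs_div, div_le_one habs] using hy1
  · rw [Set.mem_Icc, ← abs_le]
    simpa [abs_div, div_le_iff₀ habs, mul_comm] using hy0
  · ext i
    fin_cases i
    · simp [(hS _).1, mul_div_cancel₀ _ hc]
    · simp [(hS _).2, mul_div_cancel₀ _ hc]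

open Set in
theorem affine_images_cover_box_general
    (r s v a : ℝ) (hr0 : 0 < r) (ha : 1 < a)
    (h1 : r * v + s > 1) (h2 : s < r * v) (h3 : r > v)
    (S ST : EuclideanSpace ℝ (Fin 2) → EuclideanSpace ℝ (Fin 2))
    (hS : ∀ x, S x 0 = r * x 1 + s ∧ S x 1 = r * x 0)
    (hST : ∀ x, ST x 0 = -(a * r) * x 1 - s ∧ ST x 1 = -(a * r) * x 0) :
    {x : EuclideanSpace ℝ (Fin 2) | x 0 ∈ Icc (-1 : ℝ) 1 ∧ x 1 ∈ Icc (-v) v} ⊆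
      S '' {x | x 0 ∈ Icc (-1 : ℝ) 1 ∧ x 1 ∈ Icc (-v) v} ∪
        ST '' {x | x 0 ∈ Icc (-1 : ℝ) 1 ∧ x 1 ∈ Icc (-v) v} := by
  rintro y ⟨⟨hy0l, hy0r⟩, hy1⟩
  have hy1 : |y 1| ≤ v := abs_le.mpr hy1
  have har0 : 0 < a * r := mul_pos (by linarith) hr0
  have hr_le_ar : r ≤ a * r := le_mul_of_one_le_left hr0.le ha.le
  have habs_ar : |-(a * r)| = a * r := by rw [abs_neg, abs_of_pos har0]
  rcases le_or_gt (s - r * v) (y 0) with hright | hleft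
  · refine .inl (mem_image_box_of_swap_affine hr0.ne' hS ?_ ?_)
    · rw [abs_of_pos hr0, abs_le]
      constructor <;> linarith
    · rw [abs_of_pos hr0]
      linarith
  · have hST' : ∀ x, ST x 0 = -(a * r) * x 1 + -s ∧ ST x 1 = -(a * r) * x 0 := fun x =>
      ⟨by rw [(hST x).1, sub_eq_add_neg], (hST x).2⟩
    refine .inr (mem_image_box_of_swap_affine (neg_ne_zero.mpr har0.ne') hST' ?_ ?_)
    · have hrv : r * v ≤ a * r * v :=
        mul_le_mul_of_nonneg_right hr_le_ar ((abs_nonneg _).trans hy1)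
      rw [habs_ar, sub_neg_eq_add, abs_le]
      constructor <;> linarith
    · rw [habs_ar]
      linarith

open Set in
/-- Under the parameter conditions, the images of the box `B = [-1,1] × [-v,v]`
under `S` and `S ∘ T` together cover `B`. -/
theorem affine_images_cover_box
    (r s v a : ℝ) (hr0 : 0 < r) (hr1 : r < 1) (hs : 0 < s) (ha : 1 < a)
    (har : a * r < 1) (hv0 : 0 < v) (hv1 : v < 1)
    (h1 : r * v + s > 1) (h2 : s < r * v) (h3 : r > v)
    (S ST : EuclideanSpace ℝ (Fin 2) → EuclideanSpace ℝ (Fin 2))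
    (hS : ∀ x, S x 0 = r * x 1 + s ∧ S x 1 = r * x 0)
    (hST : ∀ x, ST x 0 = -(a * r) * x 1 - s ∧ ST x 1 = -(a * r) * x 0) :
    {x : EuclideanSpace ℝ (Fin 2) | x 0 ∈ Icc (-1 : ℝ) 1 ∧ x 1 ∈ Icc (-v) v} ⊆
      S '' {x | x 0 ∈ Icc (-1 : ℝ) 1 ∧ x 1 ∈ Icc (-v) v} ∪
        ST '' {x | x 0 ∈ Icc (-1 : ℝ) 1 ∧ x 1 ∈ Icc (-v) v} :=
  affine_images_cover_box_general r s v a hr0 ha h1 h2 h3 S ST hS hST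
end

section
/- Let X be a complete metric space and f₁, f₂: X → X contractions with constants κ₁, κ₂ < 1. Then there exists a nonempty compact set Δ ⊆ X with Δ = f₁(Δ) ∪ f₂(Δ), and Δ is the unique nonempty compact set with this property (the Hutchinson attractor). -/
/-!
The Hutchinson operator `A ↦ f₁ '' A ∪ f₂ '' A` acts on the nonempty compact sets, which form a
complete metric space under the Hausdorff distance. An image under a `K`-Lipschitz map moves
Hausdorff distances by a factor at most `K`, and a union of two pairs of sets is at Hausdorff
distance at most the larger of the two distances, so the operator is a contraction with constant
`max κ₁ κ₂`. Banach's fixed point theorem then gives the attractor and its uniqueness.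
-/

open Metric Set TopologicalSpace Function
open scoped NNReal ENNReal

section Lipschitz

variable {α β : Type*} [PseudoEMetricSpace α] [PseudoEMetricSpace β] {K : ℝ≥0} {f : α → β}

theorem LipschitzWith.infEDist_image_le (hf : LipschitzWith K f) (x : α) {t : Set α}
    (ht : t.Nonempty) : infEDist (f x) (f '' t) ≤ K * infEDist x t := by
  have : Nonempty t := ht.to_subtype
  simp only [infEDist, iInf_subtype']
  rw [ENNReal.mul_iInf (by simp)]
  exact le_iInf fun y => (iInf_le _ ⟨f y, mem_image_of_mem f y.2⟩).trans (hf x y)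

theorem LipschitzWith.hausdorffEDist_image_le (hf : LipschitzWith K f) {s t : Set α}
    (hs : s.Nonempty) (ht : t.Nonempty) :
    hausdorffEDist (f '' s) (f '' t) ≤ K * hausdorffEDist s t := by
  refine hausdorffEDist_le_of_infEDist ?_ ?_
  · rintro _ ⟨x, hx, rfl⟩
    exact (hf.infEDist_image_le x ht).trans
      (mul_le_mul_right (infEDist_le_hausdorffEDist_of_mem hx) _)
  · rintro _ ⟨x, hx, rfl⟩
    rw [hausdorffEDist_comm]
    exact (hf.infEDist_image_le x hs).trans
      (mul_le_mul_right (infEDist_le_hausdorffEDist_of_mem hx) _)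

end Lipschitz

namespace TopologicalSpace.NonemptyCompacts

variable {α β : Type*}

instance [TopologicalSpace α] [Nonempty α] : Nonempty (NonemptyCompacts α) :=
  ‹Nonempty α›.map ({·})

theorem existsUnique_iff [TopologicalSpace α] {P : Set α → Prop} :
    (∃! K : NonemptyCompacts α, P K) ↔ ∃! s : Set α, s.Nonempty ∧ IsCompact s ∧ P s := by
  constructor
  · rintro ⟨K, hK, huniq⟩
    exact ⟨K, ⟨K.nonempty, K.isCompact, hK⟩,
      fun s ⟨hne, hc, hs⟩ => congrArg SetLike.coe (huniq ⟨⟨s, hc⟩, hne⟩ hs)⟩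
  · rintro ⟨s, ⟨hne, hc, hs⟩, huniq⟩
    exact ⟨⟨⟨s, hc⟩, hne⟩, hs,
      fun K hK => NonemptyCompacts.ext (huniq K ⟨K.nonempty, K.isCompact, hK⟩)⟩

theorem lipschitzWith_map [EMetricSpace α] [EMetricSpace β] {K : ℝ≥0} {f : α → β}
    (hf : LipschitzWith K f) : LipschitzWith K (NonemptyCompacts.map f hf.continuous) :=
  fun s t => hf.hausdorffEDist_image_le s.nonempty t.nonempty

section Hutchinson

variable [TopologicalSpace α] [TopologicalSpace β]

def hutchinson (f g : α → β) (hf : Continuous f) (hg : Continuous g)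
    (A : NonemptyCompacts α) : NonemptyCompacts β :=
  A.map f hf ⊔ A.map g hg

theorem isFixedPt_hutchinson_iff {f g : α → α} {hf : Continuous f} {hg : Continuous g}
    {A : NonemptyCompacts α} :
    IsFixedPt (hutchinson f g hf hg) A ↔ (A : Set α) = f '' A ∪ g '' A :=
  SetLike.ext'_iff.trans eq_comm

end Hutchinson

theorem lipschitzWith_hutchinson [EMetricSpace α] [EMetricSpace β] {K₁ K₂ : ℝ≥0} {f g : α → β}
    (hf : LipschitzWith K₁ f) (hg : LipschitzWith K₂ g) :
    LipschitzWith (max K₁ K₂) (hutchinson f g hf.continuous hg.continuous) := by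
  have h := lipschitz_sup.comp ((lipschitzWith_map hf).prodMk (lipschitzWith_map hg))
  rwa [one_mul] at h

theorem contractingWith_hutchinson [EMetricSpace α] {K₁ K₂ : ℝ≥0} {f g : α → α}
    (hf : LipschitzWith K₁ f) (hg : LipschitzWith K₂ g) (hK₁ : K₁ < 1) (hK₂ : K₂ < 1) :
    ContractingWith (max K₁ K₂) (hutchinson f g hf.continuous hg.continuous) :=
  ⟨max_lt hK₁ hK₂, lipschitzWith_hutchinson hf hg⟩

end TopologicalSpace.NonemptyCompacts

theorem exists_unique_hutchinson_attractor_general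
    {X : Type*} [MetricSpace X] [CompleteSpace X] [Nonempty X]
    (f₁ f₂ : X → X) (κ₁ κ₂ : ℝ)
    (hκ₁ : κ₁ < 1) (hκ₂ : κ₂ < 1)
    (hf₁ : ∀ x y, dist (f₁ x) (f₁ y) ≤ κ₁ * dist x y)
    (hf₂ : ∀ x y, dist (f₂ x) (f₂ y) ≤ κ₂ * dist x y) :
    ∃! Δ : Set X, Δ.Nonempty ∧ IsCompact Δ ∧ Δ = f₁ '' Δ ∪ f₂ '' Δ := by
  have hL₁ := LipschitzWith.of_dist_le' hf₁
  have hL₂ := LipschitzWith.of_dist_le' hf₂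
  have hT := NonemptyCompacts.contractingWith_hutchinson hL₁ hL₂ (Real.toNNReal_lt_one.2 hκ₁)
    (Real.toNNReal_lt_one.2 hκ₂)
  open NonemptyCompacts in
  exact existsUnique_iff.mp ⟨hT.fixedPoint, isFixedPt_hutchinson_iff.mp hT.fixedPoint_isFixedPt,
    fun A hA => hT.fixedPoint_unique (isFixedPt_hutchinson_iff.mpr hA)⟩

/-- Hutchinson: two contractions of a nonempty complete metric space have a unique
nonempty compact invariant set `Δ = f₁(Δ) ∪ f₂(Δ)`. -/
theorem exists_unique_hutchinson_attractor
    {X : Type*} [MetricSpace X] [CompleteSpace X] [Nonempty X]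
    (f₁ f₂ : X → X) (κ₁ κ₂ : ℝ) (hκ₁0 : 0 ≤ κ₁) (hκ₂0 : 0 ≤ κ₂)
    (hκ₁ : κ₁ < 1) (hκ₂ : κ₂ < 1)
    (hf₁ : ∀ x y, dist (f₁ x) (f₁ y) ≤ κ₁ * dist x y)
    (hf₂ : ∀ x y, dist (f₂ x) (f₂ y) ≤ κ₂ * dist x y) :
    ∃! Δ : Set X, Δ.Nonempty ∧ IsCompact Δ ∧ Δ = f₁ '' Δ ∪ f₂ '' Δ :=
  exists_unique_hutchinson_attractor_general f₁ f₂ κ₁ κ₂ hκ₁ hκ₂ hf₁ hf₂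
end

section
/- Let X be a complete metric space, f₁, f₂: X → X contractions with attractor Δ (so Δ = f₁(Δ) ∪ f₂(Δ)), and let B ⊆ X be a nonempty compact set with B ⊆ f₁(B) ∪ f₂(B). Then B ⊆ Δ. -/
/-- Any nonempty compact set `B` with the covering property `B ⊆ f₁(B) ∪ f₂(B)` is
contained in the Hutchinson attractor `Δ` of the contractions `f₁, f₂`. -/
theorem subset_attractor_of_covering
    {X : Type*} [MetricSpace X] [CompleteSpace X]
    (f₁ f₂ : X → X) (κ₁ κ₂ : ℝ) (hκ₁0 : 0 ≤ κ₁) (hκ₂0 : 0 ≤ κ₂)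
    (hκ₁ : κ₁ < 1) (hκ₂ : κ₂ < 1)
    (hf₁ : ∀ x y, dist (f₁ x) (f₁ y) ≤ κ₁ * dist x y)
    (hf₂ : ∀ x y, dist (f₂ x) (f₂ y) ≤ κ₂ * dist x y)
    (Δ : Set X) (hΔne : Δ.Nonempty) (hΔc : IsCompact Δ)
    (hΔinv : Δ = f₁ '' Δ ∪ f₂ '' Δ)
    (B : Set X) (hBne : B.Nonempty) (hBc : IsCompact B)
    (hBcov : B ⊆ f₁ '' B ∪ f₂ '' B) :
    B ⊆ Δ := by
  set κ := max κ₁ κ₂ with hκdef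
  have hκ0 : 0 ≤ κ := le_trans hκ₁0 (le_max_left _ _)
  have hκ1 : κ < 1 := max_lt hκ₁ hκ₂
  obtain ⟨b₀, hb₀B, hmax⟩ := hBc.exists_isMaxOn hBne
    (Metric.continuous_infDist_pt Δ).continuousOn
  have key : Metric.infDist b₀ Δ ≤ κ * Metric.infDist b₀ Δ := by
    rcases hBcov hb₀B with ⟨b', hb', hfb⟩ | ⟨b', hb', hfb⟩
    · obtain ⟨a, haΔ, hda⟩ := hΔc.exists_infDist_eq_dist hΔne b'
      have hfa : f₁ a ∈ Δ := hΔinv ▸ Or.inl ⟨a, haΔ, rfl⟩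
      calc Metric.infDist b₀ Δ ≤ dist b₀ (f₁ a) := Metric.infDist_le_dist_of_mem hfa
        _ = dist (f₁ b') (f₁ a) := by rw [hfb]
        _ ≤ κ₁ * dist b' a := hf₁ _ _
        _ = κ₁ * Metric.infDist b' Δ := by rw [hda]
        _ ≤ κ * Metric.infDist b' Δ :=
            mul_le_mul_of_nonneg_right (le_max_left _ _) Metric.infDist_nonneg
        _ ≤ κ * Metric.infDist b₀ Δ := mul_le_mul_of_nonneg_left (hmax hb') hκ0
    · obtain ⟨a, haΔ, hda⟩ := hΔc.exists_infDist_eq_dist hΔne b'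
      have hfa : f₂ a ∈ Δ := hΔinv ▸ Or.inr ⟨a, haΔ, rfl⟩
      calc Metric.infDist b₀ Δ ≤ dist b₀ (f₂ a) := Metric.infDist_le_dist_of_mem hfa
        _ = dist (f₂ b') (f₂ a) := by rw [hfb]
        _ ≤ κ₂ * dist b' a := hf₂ _ _
        _ = κ₂ * Metric.infDist b' Δ := by rw [hda]
        _ ≤ κ * Metric.infDist b' Δ :=
            mul_le_mul_of_nonneg_right (le_max_right _ _) Metric.infDist_nonneg
        _ ≤ κ * Metric.infDist b₀ Δ := mul_le_mul_of_nonneg_left (hmax hb') hκ0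
  have h0 : Metric.infDist b₀ Δ ≤ 0 := by nlinarith [Metric.infDist_nonneg (x := b₀) (s := Δ)]
  intro b hb
  have hz : Metric.infDist b Δ = 0 :=
    le_antisymm (le_trans (hmax hb) h0) Metric.infDist_nonneg
  exact (hΔc.isClosed.mem_iff_infDist_zero hΔne).2 hz
end
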